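/- Let M ≥ 1 be a natural number and let Z be a random variable distributed according to the χ²(2M) distribution, i.e., the Gamma distribution with shape parameter M and rate parameter 1/2. Then for every real x > 2M, P(Z > x) ≤ ((x / (2M)) · e^{1 − x/(2M)})^M. -/

import Mathlib

/-! Chernoff bound by exponential tilting: on `(x, ∞)` the `Gamma(M, 1/2)` density is at most
`(1/2 / s)^M e^{-(1/2 - s) x}` times the `Gamma(M, s)` density, for any `0 < s ≤ 1/2`, and the
latter has total mass one. The choice `s = M / x` optimises the resulting bound. -/

open MeasureTheory ProbabilityTheory Real Set

namespace ProbabilityTheory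

lemma gammaPDFReal_eq_mul_gammaPDFReal {a r s : ℝ} (hr : 0 ≤ r) (hs : 0 < s) (z : ℝ) :
    gammaPDFReal a r z = (r / s) ^ a * exp (-((r - s) * z)) * gammaPDFReal a s z := by
  unfold gammaPDFReal
  split_ifs
  · have hpow : (r / s) ^ a * s ^ a = r ^ a := by
      rw [← mul_rpow (div_nonneg hr hs.le) hs.le, div_mul_cancel₀ _ hs.ne']
    have hexp : exp (-(r * z)) = exp (-((r - s) * z)) * exp (-(s * z)) := by
      rw [← exp_add]
      ring_nf
    rw [← hpow, hexp]
    ring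
  · simp

lemma gammaMeasure_Ioi_le {a r s : ℝ} (ha : 0 < a) (hs : 0 < s) (hsr : s ≤ r) (x : ℝ) :
    gammaMeasure a r (Ioi x) ≤ ENNReal.ofReal ((r / s) ^ a * exp (-((r - s) * x))) := by
  have hr : 0 ≤ r := hs.le.trans hsr
  set C := (r / s) ^ a * exp (-((r - s) * x))
  have hC : 0 ≤ C := by positivity
  have hdensity : ∀ z ∈ Ioi x, gammaPDF a r z ≤ ENNReal.ofReal C * gammaPDF a s z := by
    intro z hz
    rw [gammaPDF, gammaPDF, ← ENNReal.ofReal_mul hC,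
      gammaPDFReal_eq_mul_gammaPDFReal hr hs]
    have hrs : 0 ≤ r - s := sub_nonneg.mpr hsr
    have hxz : x ≤ z := le_of_lt hz
    refine ENNReal.ofReal_le_ofReal (mul_le_mul_of_nonneg_right ?_ (gammaPDFReal_nonneg ha hs z))
    dsimp only [C]
    gcongr
  rw [gammaMeasure, withDensity_apply _ measurableSet_Ioi]
  calc ∫⁻ z in Ioi x, gammaPDF a r z
      ≤ ∫⁻ z in Ioi x, ENNReal.ofReal C * gammaPDF a s z :=
        setLIntegral_mono (((measurable_gammaPDFReal a s).ennreal_ofReal).const_mul _) hdensity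
    _ = ENNReal.ofReal C * ∫⁻ z in Ioi x, gammaPDF a s z :=
        lintegral_const_mul' _ _ ENNReal.ofReal_ne_top
    _ ≤ ENNReal.ofReal C * ∫⁻ z, gammaPDF a s z :=
        mul_le_mul_right (setLIntegral_le_lintegral _ _) _
    _ = ENNReal.ofReal C := by rw [lintegral_gammaPDF_eq_one ha hs, mul_one]

end ProbabilityTheory

theorem stmt_5_general (M : ℕ) (hM : 1 ≤ M)
    {Ω : Type*} [MeasurableSpace Ω] (μ : Measure Ω)
    (Z : Ω → ℝ)
    (hdist : Measure.map Z μ = gammaMeasure M (1 / 2))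
    (x : ℝ) (hx : 2 * M < x) :
    μ {ω | x < Z ω} ≤
      ENNReal.ofReal ((x / (2 * M) * Real.exp (1 - x / (2 * M))) ^ M) := by
  have hMpos : (0 : ℝ) < M := by exact_mod_cast hM
  have hx0 : 0 < x := by linarith
  have hZ : AEMeasurable Z μ := by
    refine AEMeasurable.of_map_ne_zero ?_
    rw [hdist]
    exact (isProbabilityMeasure_gammaMeasure hMpos one_half_pos).ne_zero
  have hlaw : μ {ω | x < Z ω} = gammaMeasure M (1 / 2) (Ioi x) := by
    rw [← hdist, Measure.map_apply_of_aemeasurable hZ measurableSet_Ioi]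
    rfl
  have hs : (M : ℝ) / x ≤ 1 / 2 := by
    rw [div_le_iff₀ hx0]
    linarith
  rw [hlaw]
  convert gammaMeasure_Ioi_le hMpos (div_pos hMpos hx0) hs x using 2
  rw [rpow_natCast, mul_pow, ← exp_nat_mul]
  congr 2
  · field_simp
  · field_simp
    ring

/-- If `Z` is a `χ²(2M)` random variable (Gamma distribution with shape `M` and rate `1/2`),
with `M ≥ 1`, then for every real `x > 2M`,
`P(Z > x) ≤ ((x / (2M)) · e^{1 - x/(2M)})^M`. -/
theorem stmt_5 (M : ℕ) (hM : 1 ≤ M)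
    {Ω : Type*} [MeasurableSpace Ω] (μ : Measure Ω) [IsProbabilityMeasure μ]
    (Z : Ω → ℝ)
    (hdist : Measure.map Z μ = gammaMeasure M (1 / 2))
    (x : ℝ) (hx : 2 * M < x) :
    μ {ω | x < Z ω} ≤
      ENNReal.ofReal ((x / (2 * M) * Real.exp (1 - x / (2 * M))) ^ M) :=
  stmt_5_general M hM μ Z hdist x hx
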